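/- Classification of nimreps for group-like (lattice) fusion: every nimrep of the fusion ring Z[L*/L] (in which every basis element is a simple-current) is equivalent to one of the form: boundary states B = L*/E* for some intermediate lattice L ⊆ E ⊆ L*, with module structure [u].[m]_{E*} = [u+m]_{E*}; the exponents are the cosets E/L, each with multiplicity 1. -/

import Mathlib

/-!
Since `N u (N u)ᵀ = N 0 = 1` and the entries are natural numbers, every `N u` is a permutation
matrix, so a nimrep of `L*/L` is a transitive action of `L*/L` on `B`, i.e. translation on
`(L*/L)/K` for the stabilizer `K` of a point. Finiteness of `L*/L` forces `L` to span `ℝⁿ`, so every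
group between `L` and `L*` is a full lattice and equals its double dual; hence `K = E*/L` for `E`
the dual of the preimage of `K` in `L*`. The characters `u ↦ exp(2πi e⬝u)`, `e ∈ E`, are trivial
on `K`, and a character of a transitive action that is trivial on a stabilizer has, up to scale,
exactly one eigenvector.
-/

open scoped BigOperators
open Complex

noncomputable section

/-- The Euclidean dot product on `Fin n → ℝ`. -/
def dotR {n : ℕ} (u v : Fin n → ℝ) : ℝ := ∑ i, u i * v i

lemma dotR_add_left {n : ℕ} (u v w : Fin n → ℝ) :
    dotR (u + v) w = dotR u w + dotR v w := by
  simp [dotR, add_mul, Finset.sum_add_distrib]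

lemma dotR_neg_left {n : ℕ} (u w : Fin n → ℝ) : dotR (-u) w = -dotR u w := by
  simp [dotR]

/-- `L` is an even lattice: `u ⬝ u ∈ 2ℤ` for all `u ∈ L`. -/
def IsEvenLattice {n : ℕ} (L : AddSubgroup (Fin n → ℝ)) : Prop :=
  ∀ u ∈ L, ∃ m : ℤ, dotR u u = 2 * m

/-- The dual lattice `L* = {x : x ⬝ L ⊆ ℤ}`. -/
def dualLattice {n : ℕ} (L : AddSubgroup (Fin n → ℝ)) : AddSubgroup (Fin n → ℝ) where
  carrier := {x | ∀ l ∈ L, ∃ m : ℤ, dotR x l = m}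
  zero_mem' := fun l _ => ⟨0, by simp [dotR]⟩
  add_mem' := by
    intro a b ha hb l hl
    obtain ⟨m, hm⟩ := ha l hl
    obtain ⟨m', hm'⟩ := hb l hl
    exact ⟨m + m', by rw [dotR_add_left, hm, hm']; push_cast; ring⟩
  neg_mem' := by
    intro a ha l hl
    obtain ⟨m, hm⟩ := ha l hl
    exact ⟨-m, by rw [dotR_neg_left, hm]; push_cast; ring⟩

/-- The group of primaries `L*/L`. -/
abbrev latQuot {n : ℕ} (L : AddSubgroup (Fin n → ℝ)) :=
  dualLattice L ⧸ (L.addSubgroupOf (dualLattice L))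

/-- The class of an element of `L*` in `L*/L`. -/
def mkQ {n : ℕ} (L : AddSubgroup (Fin n → ℝ)) (x : dualLattice L) : latQuot L :=
  QuotientAddGroup.mk x

/-- The S-matrix of the lattice chiral data:
`S_{[u],[v]} = |L*/L|^{-1/2} exp(2 π i u⬝v)`. -/
def Smat {n : ℕ} (L : AddSubgroup (Fin n → ℝ)) [Fintype (latQuot L)] :
    Matrix (latQuot L) (latQuot L) ℂ := fun x y =>
  (((Real.sqrt (Fintype.card (latQuot L)))⁻¹ : ℝ) : ℂ) *
    Complex.exp (2 * Real.pi * Complex.I *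
      (dotR ((Quotient.out x : dualLattice L) : Fin n → ℝ)
            ((Quotient.out y : dualLattice L) : Fin n → ℝ)))

/-- The subgroup of `L*` of vectors pairing integrally with `E`. -/
def intAgainst {n : ℕ} (L E : AddSubgroup (Fin n → ℝ)) :
    AddSubgroup (dualLattice L) where
  carrier := {m | ∀ e ∈ E, ∃ z : ℤ, dotR (m : Fin n → ℝ) e = z}
  zero_mem' := fun e _ => ⟨0, by simp [dotR]⟩
  add_mem' := by
    intro a b ha hb e he
    obtain ⟨z, hz⟩ := ha e he
    obtain ⟨z', hz'⟩ := hb e he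
    refine ⟨z + z', ?_⟩
    push_cast
    rw [dotR_add_left, hz, hz']
  neg_mem' := by
    intro a ha e he
    obtain ⟨z, hz⟩ := ha e he
    refine ⟨-z, ?_⟩
    push_cast
    rw [dotR_neg_left, hz]

/-- The subgroup `E*/L` of `L*/L` (the kernel of the translation nimrep with
exponents `E/L`). -/
def Kdual {n : ℕ} (L E : AddSubgroup (Fin n → ℝ)) : AddSubgroup (latQuot L) :=
  AddSubgroup.map (QuotientAddGroup.mk' (L.addSubgroupOf (dualLattice L)))
    (intAgainst L E)

open AddAction
open scoped Matrix

section Nimrep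

variable {G B : Type*} [AddCommGroup G] [Fintype B] [DecidableEq B]

structure IsNimrep (N : G → Matrix B B ℕ) : Prop where
  map_zero : N 0 = 1
  map_add : ∀ u v, N u * N v = N (u + v)
  map_neg : ∀ u, N (-u) = (N u)ᵀ
  indecomposable : ∀ x y, ∃ u, N u x y ≠ 0

theorem exists_eq_single_of_sum_mul_self_eq_one {ι : Type*} [Fintype ι] [DecidableEq ι]
    {f : ι → ℕ} (h : ∑ i, f i * f i = 1) : ∃ j, f = Pi.single j 1 := by
  obtain ⟨j, -, hj⟩ := Finset.exists_ne_zero_of_sum_ne_zero (h ▸ one_ne_zero)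
  have hsplit := Finset.add_sum_erase Finset.univ (fun i => f i * f i) (Finset.mem_univ j)
  rw [h] at hsplit
  have hfj : f j * f j = 1 := by omega
  have hrest : ∑ i ∈ Finset.univ.erase j, f i * f i = 0 := by omega
  refine ⟨j, funext fun i => ?_⟩
  rcases eq_or_ne i j with rfl | hij
  · simpa using hfj
  · simpa [hij] using Finset.sum_eq_zero_iff.1 hrest i (by simp [hij])

namespace IsNimrep

variable {N : G → Matrix B B ℕ}

theorem exists_row_eq_single (hN : IsNimrep N) (u : G) (x : B) :
    ∃ y, N u x = Pi.single y 1 := by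
  apply exists_eq_single_of_sum_mul_self_eq_one
  have h := congrFun (congrFun (hN.map_add u (-u)) x) x
  rw [add_neg_cancel, hN.map_zero, hN.map_neg] at h
  simpa [Matrix.mul_apply] using h

noncomputable def act (hN : IsNimrep N) (u : G) (x : B) : B :=
  (hN.exists_row_eq_single u x).choose

theorem row_eq_single (hN : IsNimrep N) (u : G) (x : B) : N u x = Pi.single (hN.act u x) 1 :=
  (hN.exists_row_eq_single u x).choose_spec

theorem apply_ne_zero_iff (hN : IsNimrep N) {u : G} {x y : B} :
    N u x y ≠ 0 ↔ hN.act u x = y := by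
  rw [hN.row_eq_single, Pi.single_apply]
  split_ifs with h <;> simp [h, eq_comm]

theorem act_zero (hN : IsNimrep N) (x : B) : hN.act 0 x = x := by
  rw [← hN.apply_ne_zero_iff, hN.map_zero]
  simp

theorem act_add (hN : IsNimrep N) (u v : G) (x : B) :
    hN.act (u + v) x = hN.act v (hN.act u x) := by
  rw [← hN.apply_ne_zero_iff, ← hN.map_add, Matrix.mul_apply, hN.row_eq_single u x]
  simpa [Pi.single_apply] using hN.apply_ne_zero_iff.2 rfl

theorem exists_addAction (hN : IsNimrep N) :
    ∃ _ : AddAction G B, IsPretransitive G B ∧ ∀ u x, N u x = Pi.single (u +ᵥ x) 1 := by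
  let : AddAction G B :=
    { vadd := hN.act
      zero_vadd := hN.act_zero
      add_vadd u v x := by
        change hN.act (u + v) x = hN.act u (hN.act v x)
        rw [add_comm, hN.act_add] }
  exact ⟨this, ⟨fun x y => (hN.indecomposable x y).imp fun _ => hN.apply_ne_zero_iff.1⟩,
    hN.row_eq_single⟩

end IsNimrep
end Nimrep

section Transitive

variable {G B : Type*} [AddGroup G] [AddAction G B] [IsPretransitive G B]

variable (G) in
noncomputable def equivQuotientStabilizer (x₀ : B) : B ≃ G ⧸ stabilizer G x₀ :=
  (Equiv.ofBijective (ofQuotientStabilizer G x₀) ⟨injective_ofQuotientStabilizer G x₀,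
    fun y => (exists_vadd_eq G x₀ y).elim fun g hg => ⟨g, hg⟩⟩).symm

def IsSemiinvariant {R : Type*} [Mul R] (χ : G → R) (v : B → R) : Prop :=
  ∀ g x, v (g +ᵥ x) = χ g * v x

variable {R : Type*} [CommSemiring R] [Nontrivial R]

theorem exists_isSemiinvariant_ne_zero (x₀ : B) (χ : AddChar G R)
    (hχ : ∀ g ∈ stabilizer G x₀, χ g = 1) : ∃ v : B → R, v ≠ 0 ∧ IsSemiinvariant χ v := by
  choose rep hrep using exists_vadd_eq G x₀
  have hχ_eq : ∀ a b : G, a +ᵥ x₀ = b +ᵥ x₀ → χ a = χ b := by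
    intro a b h
    have hab : -a + b ∈ stabilizer G x₀ := by
      rw [mem_stabilizer_iff, add_vadd, ← h, neg_vadd_vadd]
    rw [← add_neg_cancel_left a b, χ.map_add_eq_mul, hχ _ hab, mul_one]
  -- `v (g +ᵥ x₀) = χ g` is well defined since `χ` is trivial on the stabilizer.
  refine ⟨fun y => χ (rep y), fun h => ?_, fun g x => ?_⟩
  · have h₀ : χ (rep x₀) = χ 0 := hχ_eq _ _ (by rw [hrep, zero_vadd])
    simpa [h₀] using congrFun h x₀
  · change χ (rep (g +ᵥ x)) = χ g * χ (rep x)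
    rw [← χ.map_add_eq_mul]
    exact hχ_eq _ _ (by rw [hrep, add_vadd, hrep])

theorem IsSemiinvariant.exists_smul_eq_smul {χ : G → R} {v w : B → R}
    (hv : IsSemiinvariant χ v) (hw : IsSemiinvariant χ w) :
    ∃ c c' : R, (c, c') ≠ (0, 0) ∧ c • v = c' • w := by
  by_cases h : ∃ x, (w x, v x) ≠ (0, 0)
  · obtain ⟨x, hx⟩ := h
    refine ⟨w x, v x, hx, funext fun y => ?_⟩
    obtain ⟨g, rfl⟩ := exists_vadd_eq G x y
    simp only [Pi.smul_apply, smul_eq_mul, hv g x, hw g x]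
    ring
  · push Not at h
    refine ⟨1, 1, by simp, funext fun y => ?_⟩
    simp_all

end Transitive

theorem equivQuotientStabilizer_vadd {G B : Type*} [AddCommGroup G] [AddAction G B]
    [IsPretransitive G B] (x₀ : B) (g : G) (x : B) :
    equivQuotientStabilizer G x₀ (g +ᵥ x) = ↑g + equivQuotientStabilizer G x₀ x := by
  rw [← Equiv.eq_symm_apply]
  conv_lhs => rw [← (equivQuotientStabilizer G x₀).symm_apply_apply x]
  induction equivQuotientStabilizer G x₀ x using QuotientAddGroup.induction_on with
  | H h => exact (add_vadd g h x₀).symm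

section Lattice

variable {n : ℕ}

abbrev dotForm (n : ℕ) : LinearMap.BilinForm ℝ (Fin n → ℝ) := dotProductBilin ℝ ℝ

theorem dotForm_apply (u v : Fin n → ℝ) : dotForm n u v = dotR u v := rfl

theorem dotR_comm (u v : Fin n → ℝ) : dotR u v = dotR v u := dotProduct_comm u v

theorem dotR_add_right (u v w : Fin n → ℝ) : dotR u (v + w) = dotR u v + dotR u w :=
  dotProduct_add u v w

theorem dotR_neg_right (u v : Fin n → ℝ) : dotR u (-v) = -dotR u v := dotProduct_neg u v

theorem dotForm_nondegenerate : (dotForm n).Nondegenerate :=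
  ⟨fun x h => dotProduct_self_eq_zero.1 (h x), fun x h => dotProduct_self_eq_zero.1 (h x)⟩

theorem dotForm_isSymm : (dotForm n).IsSymm :=
  LinearMap.BilinForm.isSymm_def.2 fun x y => dotR_comm x y

theorem toIntSubmodule_dualLattice (A : AddSubgroup (Fin n → ℝ)) :
    (dualLattice A).toIntSubmodule = (dotForm n).dualSubmodule A.toIntSubmodule := by
  ext x
  change (∀ l ∈ A, ∃ m : ℤ, dotR x l = m) ↔ _
  simp only [LinearMap.BilinForm.mem_dualSubmodule, Submodule.mem_one, dotForm_apply,
    algebraMap_int_eq, eq_intCast, eq_comm]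
  rfl

theorem le_dualLattice_comm {A A' : AddSubgroup (Fin n → ℝ)} :
    A ≤ dualLattice A' ↔ A' ≤ dualLattice A := by
  suffices ∀ A A' : AddSubgroup (Fin n → ℝ), A ≤ dualLattice A' → A' ≤ dualLattice A from
    ⟨this A A', this A' A⟩
  intro A A' h x hx a ha
  rw [dotR_comm]
  exact h ha x hx

theorem dualLattice_antitone : Antitone (dualLattice (n := n)) :=
  fun _ _ h _ hx l hl => hx l (h hl)

-- A `ℤ`-basis of a full lattice is an `ℝ`-basis, and duality is an involution on spans of bases.
theorem dualLattice_dualLattice (Λ : AddSubgroup (Fin n → ℝ))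
    [DiscreteTopology Λ.toIntSubmodule] [IsZLattice ℝ Λ.toIntSubmodule] :
    dualLattice (dualLattice Λ) = Λ := by
  apply AddSubgroup.toIntSubmodule.injective
  rw [toIntSubmodule_dualLattice, toIntSubmodule_dualLattice,
    ← (Module.Free.chooseBasis ℤ Λ.toIntSubmodule).ofZLatticeBasis_span ℝ,
    LinearMap.BilinForm.dualSubmodule_dualSubmodule_of_basis _ dotForm_nondegenerate
      dotForm_isSymm]

-- A vector `v ≠ 0` orthogonal to `L` puts the line `ℝ v` into `L*`, injectively modulo `L`.
theorem span_eq_top_of_finite_latQuot (L : AddSubgroup (Fin n → ℝ)) [Finite (latQuot L)] :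
    Submodule.span ℝ (L : Set (Fin n → ℝ)) = ⊤ := by
  by_contra hne
  obtain ⟨f, hf, hfL⟩ :=
    Submodule.exists_dual_map_eq_bot_of_lt_top (lt_top_iff_ne_top.2 hne) inferInstance
  set v := ((dotForm n).toDual dotForm_nondegenerate).symm f
  have hv : v ≠ 0 := by simpa [v] using hf
  have hvL : ∀ l ∈ L, dotR v l = 0 := fun l hl => by
    rw [← dotForm_apply, LinearMap.BilinForm.apply_toDual_symm_apply]
    have := Submodule.mem_map_of_mem (f := f) (Submodule.subset_span hl)
    rwa [hfL, Submodule.mem_bot] at this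
  have hmem : ∀ t : ℝ, t • v ∈ dualLattice L := fun t l hl =>
    ⟨0, by rw [← dotForm_apply, map_smul, LinearMap.smul_apply, dotForm_apply, hvL l hl]; simp⟩
  refine not_injective_infinite_finite (fun t : ℝ => mkQ L ⟨t • v, hmem t⟩) fun t t' h => ?_
  have hdiff : (t' - t) • v ∈ L := by
    have := (QuotientAddGroup.eq.1 h : _ ∈ L.addSubgroupOf (dualLattice L))
    rw [AddSubgroup.mem_addSubgroupOf] at this
    simpa [sub_smul, neg_add_eq_sub] using this
  have hvv := hvL _ hdiff
  rw [← dotForm_apply, map_smul, dotForm_apply, smul_eq_mul, mul_eq_zero, sub_eq_zero] at hvv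
  exact hvv.resolve_right (mt dotProduct_self_eq_zero.1 hv) |>.symm

-- `L*` lies in the `ℤ`-span of the dual basis of an `ℝ`-basis of `ℝⁿ` taken from `L`.
theorem discreteTopology_dualLattice {L : AddSubgroup (Fin n → ℝ)}
    (hL : Submodule.span ℝ (L : Set (Fin n → ℝ)) = ⊤) :
    DiscreteTopology (dualLattice L).toIntSubmodule := by
  classical
  let b := Module.Basis.ofSpan hL.ge
  have hb : Submodule.span ℤ (Set.range b) ≤ L.toIntSubmodule :=
    Submodule.span_le.2 (Module.Basis.ofSpan_subset hL.ge)
  have hle : (dualLattice L).toIntSubmodule ≤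
      Submodule.span ℤ (Set.range ((dotForm n).dualBasis dotForm_nondegenerate b)) := by
    rw [← LinearMap.BilinForm.dualSubmodule_span_of_basis _ dotForm_nondegenerate,
      toIntSubmodule_dualLattice]
    exact fun x hx y hy => hx y (hb hy)
  exact DiscreteTopology.of_subset (inferInstance : DiscreteTopology (Submodule.span ℤ _)) hle

end Lattice

section Quotient
variable {n : ℕ} {L : AddSubgroup (Fin n → ℝ)}

def preimageLattice (L : AddSubgroup (Fin n → ℝ)) (K : AddSubgroup (latQuot L)) :
    AddSubgroup (Fin n → ℝ) :=
  (K.comap (QuotientAddGroup.mk' _)).map (dualLattice L).subtype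

theorem coe_mem_preimageLattice {K : AddSubgroup (latQuot L)} {a : dualLattice L} :
    (a : Fin n → ℝ) ∈ preimageLattice L K ↔ mkQ L a ∈ K := by
  simp [preimageLattice, mkQ]

theorem preimageLattice_le_dualLattice (K : AddSubgroup (latQuot L)) :
    preimageLattice L K ≤ dualLattice L :=
  AddSubgroup.map_subtype_le _

theorem le_preimageLattice (hLL : L ≤ dualLattice L) (K : AddSubgroup (latQuot L)) :
    L ≤ preimageLattice L K := fun l hl => by
  have : mkQ L ⟨l, hLL hl⟩ = 0 :=
    (QuotientAddGroup.eq_zero_iff _).2 (AddSubgroup.mem_addSubgroupOf.2 hl)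
  exact coe_mem_preimageLattice.2 (this ▸ K.zero_mem)

theorem Kdual_dualLattice_preimageLattice (hLL : L ≤ dualLattice L) [Finite (latQuot L)]
    (K : AddSubgroup (latQuot L)) : Kdual L (dualLattice (preimageLattice L K)) = K := by
  have hspan := span_eq_top_of_finite_latQuot L
  have : DiscreteTopology (preimageLattice L K).toIntSubmodule :=
    (discreteTopology_dualLattice hspan).of_subset (preimageLattice_le_dualLattice K)
  have : IsZLattice ℝ (preimageLattice L K).toIntSubmodule :=
    ⟨top_le_iff.1 (hspan ▸ Submodule.span_mono (le_preimageLattice hLL K))⟩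
  have hint : intAgainst L (dualLattice (preimageLattice L K)) =
      K.comap (QuotientAddGroup.mk' _) := by
    ext a
    change (a : Fin n → ℝ) ∈ dualLattice (dualLattice _) ↔ _
    rw [dualLattice_dualLattice, coe_mem_preimageLattice]
    rfl
  rw [Kdual, hint,
    AddSubgroup.map_comap_eq_self_of_surjective (QuotientAddGroup.mk'_surjective _)]

theorem exists_Kdual_eq (hLL : L ≤ dualLattice L) [Finite (latQuot L)]
    (K : AddSubgroup (latQuot L)) : ∃ E, L ≤ E ∧ E ≤ dualLattice L ∧ Kdual L E = K :=
  ⟨_, le_dualLattice_comm.2 (preimageLattice_le_dualLattice K),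
    dualLattice_antitone (le_preimageLattice hLL K), Kdual_dualLattice_preimageLattice hLL K⟩

theorem cexp_two_pi_I_mul_add_int (x : ℝ) (z : ℤ) :
    exp (2 * Real.pi * I * ((x + z : ℝ) : ℂ)) = exp (2 * Real.pi * I * x) := by
  rw [ofReal_add, mul_add, Complex.exp_add, ofReal_intCast, mul_comm _ (z : ℂ),
    exp_int_mul_two_pi_mul_I, mul_one]

def dualChar (L : AddSubgroup (Fin n → ℝ)) (e : dualLattice L) : AddChar (latQuot L) ℂ where
  toFun q := q.liftOn' (fun u => exp (2 * Real.pi * I * dotR (e : Fin n → ℝ) u)) fun a b hab => by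
    obtain ⟨z, hz⟩ :=
      e.2 _ (AddSubgroup.mem_addSubgroupOf.1 (QuotientAddGroup.leftRel_apply.1 hab))
    have hb : dotR (e : Fin n → ℝ) b = dotR (e : Fin n → ℝ) a + z := by
      rw [← hz, AddSubgroup.coe_add, AddSubgroup.coe_neg, dotR_add_right, dotR_neg_right]
      ring
    simp only [hb, cexp_two_pi_I_mul_add_int]
  map_zero_eq_one' := by
    change exp (2 * Real.pi * I * dotR (e : Fin n → ℝ) 0) = 1
    simp [dotR]
  map_add_eq_mul' a b := by
    induction a using QuotientAddGroup.induction_on with | H a => ?_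
    induction b using QuotientAddGroup.induction_on with | H b => ?_
    change exp (2 * Real.pi * I * dotR (e : Fin n → ℝ) (a + b : dualLattice L)) =
      exp (2 * Real.pi * I * dotR (e : Fin n → ℝ) a) *
        exp (2 * Real.pi * I * dotR (e : Fin n → ℝ) b)
    rw [AddSubgroup.coe_add, dotR_add_right, ofReal_add, mul_add, Complex.exp_add]

theorem dualChar_mkQ (e u : dualLattice L) :
    dualChar L e (mkQ L u) = exp (2 * Real.pi * I * dotR (e : Fin n → ℝ) u) := rfl

theorem dualChar_eq_one_of_mem_Kdual {E : AddSubgroup (Fin n → ℝ)} {e : dualLattice L}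
    (he : (e : Fin n → ℝ) ∈ E) {k : latQuot L} (hk : k ∈ Kdual L E) : dualChar L e k = 1 := by
  obtain ⟨m, hm, rfl⟩ := AddSubgroup.mem_map.1 hk
  obtain ⟨z, hz⟩ := hm _ he
  change exp (2 * Real.pi * I * dotR (e : Fin n → ℝ) m) = 1
  rw [dotR_comm, hz]
  simpa using cexp_two_pi_I_mul_add_int 0 z

end Quotient

theorem stmt_5_general {n : ℕ} (L : AddSubgroup (Fin n → ℝ))
    (hLL : L ≤ dualLattice L)
    [Fintype (latQuot L)]
    (B : Type) [Fintype B] [DecidableEq B] [Nonempty B]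
    (N : latQuot L → Matrix B B ℕ)
    (hone : N 0 = 1)
    (hmul : ∀ u v, N u * N v = N (u + v))
    (htr : ∀ u, N (-u) = (N u).transpose)
    (hindec : ∀ x y : B, ∃ u, N u x y ≠ 0) :
    ∃ E : AddSubgroup (Fin n → ℝ), L ≤ E ∧ E ≤ dualLattice L ∧
      ∃ φ : B ≃ (latQuot L ⧸ Kdual L E),
        -- the nimrep is equivalent to translation on `L*/E*`
        (∀ (u : latQuot L) (x y : B),
            N u x y ≠ 0 ↔ QuotientAddGroup.mk' (Kdual L E) u + φ x = φ y) ∧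
        -- every coset in `E/L` is an exponent ...
        (∀ e : dualLattice L, (e : Fin n → ℝ) ∈ E →
          ∃ v : B → ℂ, v ≠ 0 ∧ ∀ (u : dualLattice L) (x : B),
            ∑ y, (N (mkQ L u) x y : ℂ) * v y
              = Complex.exp (2 * Real.pi * Complex.I *
                  dotR (e : Fin n → ℝ) (u : Fin n → ℝ)) * v x) ∧
        -- ... with multiplicity one
        (∀ e : dualLattice L, (e : Fin n → ℝ) ∈ E →
          ∀ v w : B → ℂ,
            (∀ (u : dualLattice L) (x : B),
              ∑ y, (N (mkQ L u) x y : ℂ) * v y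
                = Complex.exp (2 * Real.pi * Complex.I *
                    dotR (e : Fin n → ℝ) (u : Fin n → ℝ)) * v x) →
            (∀ (u : dualLattice L) (x : B),
              ∑ y, (N (mkQ L u) x y : ℂ) * w y
                = Complex.exp (2 * Real.pi * Complex.I *
                    dotR (e : Fin n → ℝ) (u : Fin n → ℝ)) * w x) →
            ∃ c c' : ℂ, (c, c') ≠ (0, 0) ∧ c • v = c' • w) := by
  obtain ⟨_, _, hN⟩ := IsNimrep.exists_addAction ⟨hone, hmul, htr, hindec⟩
  have hsum : ∀ u x (v : B → ℂ), ∑ y, (N u x y : ℂ) * v y = v (u +ᵥ x) := by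
    simp [hN, Pi.single_apply]
  have hsemi : ∀ e (v : B → ℂ), IsSemiinvariant (dualChar L e) v ↔ ∀ (u : dualLattice L) x,
      ∑ y, (N (mkQ L u) x y : ℂ) * v y =
        exp (2 * Real.pi * I * dotR (e : Fin n → ℝ) (u : Fin n → ℝ)) * v x := by
    simp only [hsum, ← dualChar_mkQ]
    exact fun e v => (QuotientAddGroup.mk_surjective (s := L.addSubgroupOf _)).forall
  obtain ⟨x₀⟩ := ‹Nonempty B›
  obtain ⟨E, hLE, hEL, hK⟩ := exists_Kdual_eq hLL (stabilizer (latQuot L) x₀)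
  have hχ : ∀ e : dualLattice L, (e : Fin n → ℝ) ∈ E → ∀ k ∈ stabilizer (latQuot L) x₀,
      dualChar L e k = 1 := fun e he k hk => dualChar_eq_one_of_mem_Kdual he (hK ▸ hk)
  refine ⟨E, hLE, hEL, ?_⟩
  rw [hK]
  refine ⟨equivQuotientStabilizer _ x₀, fun u x y => ?_, fun e he => ?_, fun e _ v w hv hw => ?_⟩
  · rw [QuotientAddGroup.mk'_apply, ← equivQuotientStabilizer_vadd, Equiv.apply_eq_iff_eq, hN]
    simp [Pi.single_apply, eq_comm]
  · obtain ⟨v, hv, hχv⟩ := exists_isSemiinvariant_ne_zero x₀ _ (hχ e he)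
    exact ⟨v, hv, (hsemi e v).1 hχv⟩
  · exact IsSemiinvariant.exists_smul_eq_smul ((hsemi e v).2 hv) ((hsemi e w).2 hw)

theorem stmt_5 {n : ℕ} (L : AddSubgroup (Fin n → ℝ))
    (hEven : IsEvenLattice L) (hLL : L ≤ dualLattice L)
    [Fintype (latQuot L)]
    (B : Type) [Fintype B] [DecidableEq B] [Nonempty B]
    (N : latQuot L → Matrix B B ℕ)
    (hone : N 0 = 1)
    (hmul : ∀ u v, N u * N v = N (u + v))
    (htr : ∀ u, N (-u) = (N u).transpose)
    (hindec : ∀ x y : B, ∃ u, N u x y ≠ 0) :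
    ∃ E : AddSubgroup (Fin n → ℝ), L ≤ E ∧ E ≤ dualLattice L ∧
      ∃ φ : B ≃ (latQuot L ⧸ Kdual L E),
        -- the nimrep is equivalent to translation on `L*/E*`
        (∀ (u : latQuot L) (x y : B),
            N u x y ≠ 0 ↔ QuotientAddGroup.mk' (Kdual L E) u + φ x = φ y) ∧
        -- every coset in `E/L` is an exponent ...
        (∀ e : dualLattice L, (e : Fin n → ℝ) ∈ E →
          ∃ v : B → ℂ, v ≠ 0 ∧ ∀ (u : dualLattice L) (x : B),
            ∑ y, (N (mkQ L u) x y : ℂ) * v y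
              = Complex.exp (2 * Real.pi * Complex.I *
                  dotR (e : Fin n → ℝ) (u : Fin n → ℝ)) * v x) ∧
        -- ... with multiplicity one
        (∀ e : dualLattice L, (e : Fin n → ℝ) ∈ E →
          ∀ v w : B → ℂ,
            (∀ (u : dualLattice L) (x : B),
              ∑ y, (N (mkQ L u) x y : ℂ) * v y
                = Complex.exp (2 * Real.pi * Complex.I *
                    dotR (e : Fin n → ℝ) (u : Fin n → ℝ)) * v x) →
            (∀ (u : dualLattice L) (x : B),
              ∑ y, (N (mkQ L u) x y : ℂ) * w y
                = Complex.exp (2 * Real.pi * Complex.I *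
                    dotR (e : Fin n → ℝ) (u : Fin n → ℝ)) * w x) →
            ∃ c c' : ℂ, (c, c') ≠ (0, 0) ∧ c • v = c' • w) :=
  stmt_5_general L hLL B N hone hmul htr hindec
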